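/- arXiv:1611.08790 — 4 statements merged into one kernel-verified Lean document; each statement's English description precedes it below -/
import Mathlib

section
/- Let A be a unital Banach algebra and e, f ∈ A quasi-idempotents with ‖e² − e‖ < ε, ‖f² − f‖ < ε, ‖e‖ ≤ N, ‖f‖ ≤ N, ‖e − f‖ < ε/(2N+1), and 0 < ε < 1/20. Let v = ef + (1−e)(1−f). Then ev − vf = 2(e² − e)f + 2e(f − f²) − (e² − e) + (f² − f), and consequently ‖ev − vf‖ ≤ (4N + 2)ε and ‖v⁻¹ev − f‖ < (4N+2)ε/(1 − 3ε). -/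
/-- With `v = e*f + (1-e)*(1-f)` and `w` an inverse of `v`, one has the
identity `e*v - v*f = 2*(e^2 - e)*f + 2*e*(f - f^2) - (e^2 - e) + (f^2 - f)`, hence
`‖e*v - v*f‖ ≤ (4N + 2)ε` and `‖w*e*v - f‖ < (4N + 2)ε / (1 - 3ε)`. -/
theorem stmt_9 {A : Type*} [NormedRing A] [NormedAlgebra ℂ A] [CompleteSpace A]
    (e f w : A) (ε N : ℝ) (hε0 : 0 < ε) (hε : ε < 1 / 20) (hN : 1 ≤ N)
    (he : ‖e ^ 2 - e‖ < ε) (hf : ‖f ^ 2 - f‖ < ε)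
    (heN : ‖e‖ ≤ N) (hfN : ‖f‖ ≤ N) (hef : ‖e - f‖ < ε / (2 * N + 1))
    (hw1 : (e * f + (1 - e) * (1 - f)) * w = 1)
    (hw2 : w * (e * f + (1 - e) * (1 - f)) = 1) :
    e * (e * f + (1 - e) * (1 - f)) - (e * f + (1 - e) * (1 - f)) * f
        = 2 * (e ^ 2 - e) * f + 2 * e * (f - f ^ 2) - (e ^ 2 - e) + (f ^ 2 - f) ∧
    ‖e * (e * f + (1 - e) * (1 - f)) - (e * f + (1 - e) * (1 - f)) * f‖ ≤ (4 * N + 2) * ε ∧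
    ‖w * e * (e * f + (1 - e) * (1 - f)) - f‖ < (4 * N + 2) * ε / (1 - 3 * ε) := by
  set v : A := e * f + (1 - e) * (1 - f) with hv
  have hNpos : (0:ℝ) < N := lt_of_lt_of_le one_pos hN
  have h2N1 : (0:ℝ) < 2 * N + 1 := by linarith
  have h13 : (0:ℝ) < 1 - 3 * ε := by linarith
  have hid : e * v - v * f
      = 2 * (e ^ 2 - e) * f + 2 * e * (f - f ^ 2) - (e ^ 2 - e) + (f ^ 2 - f) := by
    rw [hv]; noncomm_ring
  -- bounds on pieces
  have hA : ‖(e ^ 2 - e) * f‖ ≤ ‖e ^ 2 - e‖ * N :=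
    le_trans (norm_mul_le _ _) (by gcongr)
  have hB : ‖e * (f - f ^ 2)‖ ≤ N * ‖f ^ 2 - f‖ := by
    refine le_trans (norm_mul_le _ _) ?_
    rw [norm_sub_rev]
    gcongr
  have hD : ‖e * v - v * f‖ < (4 * N + 2) * ε := by
    rw [hid]
    have e1 : (2 : A) * (e ^ 2 - e) * f = (e ^ 2 - e) * f + (e ^ 2 - e) * f := by
      noncomm_ring
    have e2 : (2 : A) * e * (f - f ^ 2) = e * (f - f ^ 2) + e * (f - f ^ 2) := by
      noncomm_ring
    have t1 : ‖2 * (e ^ 2 - e) * f + 2 * e * (f - f ^ 2) - (e ^ 2 - e) + (f ^ 2 - f)‖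
        ≤ ‖2 * (e ^ 2 - e) * f‖ + ‖2 * e * (f - f ^ 2)‖ + ‖e ^ 2 - e‖ + ‖f ^ 2 - f‖ :=
      calc ‖2 * (e ^ 2 - e) * f + 2 * e * (f - f ^ 2) - (e ^ 2 - e) + (f ^ 2 - f)‖
          ≤ ‖2 * (e ^ 2 - e) * f + 2 * e * (f - f ^ 2) - (e ^ 2 - e)‖ + ‖f ^ 2 - f‖ :=
            norm_add_le _ _
        _ ≤ ‖2 * (e ^ 2 - e) * f + 2 * e * (f - f ^ 2)‖ + ‖e ^ 2 - e‖ + ‖f ^ 2 - f‖ := by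
            have := norm_sub_le (2 * (e ^ 2 - e) * f + 2 * e * (f - f ^ 2)) (e ^ 2 - e)
            linarith
        _ ≤ ‖2 * (e ^ 2 - e) * f‖ + ‖2 * e * (f - f ^ 2)‖ + ‖e ^ 2 - e‖ + ‖f ^ 2 - f‖ := by
            have := norm_add_le (2 * (e ^ 2 - e) * f) (2 * e * (f - f ^ 2))
            linarith
    have t2 : ‖2 * (e ^ 2 - e) * f‖ ≤ 2 * ‖(e ^ 2 - e) * f‖ := by
      rw [e1]; have := norm_add_le ((e ^ 2 - e) * f) ((e ^ 2 - e) * f); linarith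
    have t3 : ‖2 * e * (f - f ^ 2)‖ ≤ 2 * ‖e * (f - f ^ 2)‖ := by
      rw [e2]; have := norm_add_le (e * (f - f ^ 2)) (e * (f - f ^ 2)); linarith
    nlinarith [norm_nonneg ((e ^ 2 - e) * f), norm_nonneg (e * (f - f ^ 2)),
      norm_nonneg (e ^ 2 - e), norm_nonneg (f ^ 2 - f)]
  -- bound on ‖1 - v‖
  have h1v : ‖1 - v‖ ≤ 3 * ε := by
    have hid2 : 1 - v
        = (e - e ^ 2) + (f - f ^ 2) + (e - f) * (e - f) + (f * (e - f) - (e - f) * f) := by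
      rw [hv]; noncomm_ring
    have b1 : ‖e - e ^ 2‖ < ε := by rwa [norm_sub_rev]
    have b2 : ‖f - f ^ 2‖ < ε := by rwa [norm_sub_rev]
    have b3 : ‖(e - f) * (e - f)‖ ≤ ‖e - f‖ * ‖e - f‖ := norm_mul_le _ _
    have b4 : ‖f * (e - f) - (e - f) * f‖ ≤ N * ‖e - f‖ + ‖e - f‖ * N := by
      refine le_trans (norm_sub_le _ _) ?_
      gcongr
      · exact le_trans (norm_mul_le _ _) (by gcongr)
      · exact le_trans (norm_mul_le _ _) (by gcongr)
    have tri : ‖1 - v‖ ≤ ‖e - e ^ 2‖ + ‖f - f ^ 2‖ + ‖(e - f) * (e - f)‖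
        + ‖f * (e - f) - (e - f) * f‖ := by
      rw [hid2]
      calc ‖(e - e ^ 2) + (f - f ^ 2) + (e - f) * (e - f) + (f * (e - f) - (e - f) * f)‖
          ≤ ‖(e - e ^ 2) + (f - f ^ 2) + (e - f) * (e - f)‖
            + ‖f * (e - f) - (e - f) * f‖ := norm_add_le _ _
        _ ≤ ‖(e - e ^ 2) + (f - f ^ 2)‖ + ‖(e - f) * (e - f)‖
            + ‖f * (e - f) - (e - f) * f‖ := by
              have := norm_add_le ((e - e ^ 2) + (f - f ^ 2)) ((e - f) * (e - f))
              linarith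
        _ ≤ ‖e - e ^ 2‖ + ‖f - f ^ 2‖ + ‖(e - f) * (e - f)‖
            + ‖f * (e - f) - (e - f) * f‖ := by
              have := norm_add_le (e - e ^ 2) (f - f ^ 2)
              linarith
    have hd : ‖e - f‖ ≤ ε / (2 * N + 1) := hef.le
    have hq : ε / (2 * N + 1) * (2 * N + 1) = ε := div_mul_cancel₀ ε (ne_of_gt h2N1)
    have hq1 : ε / (2 * N + 1) ≤ 1 := by
      rw [div_le_one h2N1]; linarith
    nlinarith [norm_nonneg (e - f), mul_le_mul hd hd (norm_nonneg _) (le_of_lt (by positivity))]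
  -- the inverse trick
  have hvw : v * (w * (e * v - v * f)) = e * v - v * f := by
    rw [← mul_assoc, hw1, one_mul]
  have hsub : (1 - v) * (w * (e * v - v * f)) = w * (e * v - v * f) - (e * v - v * f) := by
    rw [sub_mul, one_mul, hvw]
  have hwD : w * (e * v - v * f)
      = (e * v - v * f) + (1 - v) * (w * (e * v - v * f)) := by
    rw [hsub]; abel
  have hT : w * e * v - f = w * (e * v - v * f) := by
    rw [mul_sub, ← mul_assoc, ← mul_assoc, hw2, one_mul]
  have hn : ‖w * (e * v - v * f)‖
      ≤ ‖e * v - v * f‖ + ‖1 - v‖ * ‖w * (e * v - v * f)‖ := by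
    calc ‖w * (e * v - v * f)‖
        = ‖(e * v - v * f) + (1 - v) * (w * (e * v - v * f))‖ := by rw [← hwD]
      _ ≤ ‖e * v - v * f‖ + ‖(1 - v) * (w * (e * v - v * f))‖ := norm_add_le _ _
      _ ≤ ‖e * v - v * f‖ + ‖1 - v‖ * ‖w * (e * v - v * f)‖ := by
          gcongr; exact norm_mul_le _ _
  refine ⟨hid, hD.le, ?_⟩
  rw [hT, lt_div_iff₀ h13]
  nlinarith [norm_nonneg (w * (e * v - v * f)), norm_nonneg (e * v - v * f),
    mul_le_mul_of_nonneg_right h1v (norm_nonneg (w * (e * v - v * f)))]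
end

section
/- Let A be a unital Banach algebra and let e ∈ A satisfy ‖e² − e‖ < ε with 0 < ε < 1/4. Then the spectrum of e is contained in the union of the open balls of radius √ε centered at 0 and at 1 in ℂ. -/
/-- If `‖e^2 - e‖ < ε < 1/4`, then the spectrum of `e` is contained in the
union of the open balls of radius `√ε` around `0` and `1` in `ℂ`. -/
theorem stmt_10 {A : Type*} [NormedRing A] [NormedAlgebra ℂ A] [CompleteSpace A]
    (e : A) (ε : ℝ) (hε0 : 0 < ε) (hε : ε < 1 / 4) (he : ‖e ^ 2 - e‖ < ε) :
    spectrum ℂ e ⊆ Metric.ball (0 : ℂ) (Real.sqrt ε) ∪ Metric.ball (1 : ℂ) (Real.sqrt ε) := by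
  intro lam hlam
  by_contra hmem
  simp only [Set.mem_union, not_or, Metric.mem_ball, Complex.dist_eq, not_lt, sub_zero] at hmem
  obtain ⟨h0, h1⟩ := hmem
  set c : A := algebraMap ℂ A lam with hc
  -- norm bound on μ = λ(λ-1)
  have hsq : 0 ≤ Real.sqrt ε := Real.sqrt_nonneg ε
  have hμnorm : ε ≤ ‖lam * (lam - 1)‖ := by
    rw [norm_mul]
    calc ε = Real.sqrt ε * Real.sqrt ε := (Real.mul_self_sqrt hε0.le).symm
    _ ≤ ‖lam‖ * ‖lam - 1‖ := by
        exact mul_le_mul h0 h1 hsq (hsq.trans h0)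
  -- μ•1 - (e^2-e) is a unit
  have hμ : lam * (lam - 1) ≠ 0 := by
    intro h
    rw [h, norm_zero] at hμnorm
    linarith
  have hu : IsUnit (algebraMap ℂ A (lam * (lam - 1)) - (e ^ 2 - e)) := by
    set r : ℂˣ := Units.mk0 _ hμ with hr
    have h1 : algebraMap ℂ A (lam * (lam - 1)) = r • (1 : A) := by
      rw [Units.smul_def, hr, Units.val_mk0, Algebra.algebraMap_eq_smul_one]
    rw [h1, IsUnit.smul_sub_iff_sub_inv_smul]
    have h2 : ‖(r⁻¹ : ℂˣ) • (e ^ 2 - e)‖ < 1 := by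
      rw [Units.smul_def, norm_smul, Units.val_inv_eq_inv_val, hr, Units.val_mk0, norm_inv]
      rw [inv_mul_lt_iff₀ (hε0.trans_le hμnorm), mul_one]
      linarith
    exact (Units.oneSub _ h2).isUnit
  have hce : Commute c e := Algebra.commutes lam e
  have hcomm : Commute (c - e) (c - 1 + e) :=
    (((Commute.refl c).sub_right (Commute.one_right c)).add_right hce).sub_left
      (((hce.symm).sub_right (Commute.one_right e).symm.symm).add_right (Commute.refl e))
  have key : (c - e) * (c - 1 + e) = algebraMap ℂ A (lam * (lam - 1)) - (e ^ 2 - e) := by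
    rw [map_mul, map_sub, map_one, ← hc]
    have h := hce.eq
    noncomm_ring
    rw [h]
    abel
  have hunit : IsUnit (c - e) := ((hcomm.isUnit_mul_iff).mp (key ▸ hu)).1
  exact spectrum.notMem_iff.mpr hunit hlam
end

section
/- Let A be a unital Banach algebra, 0 < ε < 1/20, N ≥ 1, and e ∈ A with ‖e² − e‖ < ε, ‖e‖ ≤ N, ‖1 − e‖ ≤ N. For z ∈ ℂ with |z| = √ε or |z − 1| = √ε, let y = (1/z)(1 − e) + (1/(z−1))e. Then ‖(z − e)y − 1‖ < √ε/(1 − √ε), and ‖y‖ < (N + 1)/(√ε(1 − √ε)); consequently z − e is invertible and ‖(z − e)⁻¹ − y‖ < (N + 1)/((1 − √ε)(1 − 2√ε)). -/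
/-!
For an idempotent `e`, `y = z⁻¹ • (1 - e) + (z - 1)⁻¹ • e` is exactly `(z - e)⁻¹`. For a
quasi-idempotent the defect `(z - e) y - 1 = (z (z - 1))⁻¹ • (e - e²)` is small, because
`|z| |z - 1| ≥ √ε (1 - √ε)` on the contour: `δ := ‖(z - e) y - 1‖ < √ε / (1 - √ε) < 1`.
Since `z - e` commutes with `y`, a Neumann series inverts `(z - e) y` and hence `z - e`, and
`(z - e)⁻¹ - y = y (((z - e) y)⁻¹ - 1)` has norm at most `‖y‖ δ / (1 - δ)`.
-/

open Ring

section NeumannSeries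

variable {R : Type*} [NormedRing R] [HasSummableGeomSeries R]

theorem norm_inverse_one_sub_sub_one_le {t : R} (ht : ‖t‖ < 1) :
    ‖(1 - t)⁻¹ʳ - 1‖ ≤ ‖t‖ / (1 - ‖t‖) := by
  rw [← geom_series_eq_inverse t ht, ← geom_series_succ t ht]
  refine tsum_of_norm_bounded ?_ fun n => norm_pow_le' t n.succ_pos
  simpa only [← pow_succ', div_eq_mul_inv] using
    (hasSum_geometric_of_lt_one (norm_nonneg t) ht).mul_left ‖t‖

theorem isUnit_of_norm_sub_one_lt_one {u : R} (h : ‖u - 1‖ < 1) : IsUnit u :=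
  sub_sub_cancel 1 u ▸ isUnit_one_sub_of_norm_lt_one (by rwa [norm_sub_rev])

theorem Commute.isUnit_of_norm_mul_sub_one_lt_one {a y : R} (hay : Commute a y)
    (h : ‖a * y - 1‖ < 1) : IsUnit a :=
  (hay.isUnit_mul_iff.mp (isUnit_of_norm_sub_one_lt_one h)).1

theorem Commute.norm_inverse_sub_le {a y : R} (hay : Commute a y) (h : ‖a * y - 1‖ < 1) :
    ‖a⁻¹ʳ - y‖ ≤ ‖y‖ * (‖a * y - 1‖ / (1 - ‖a * y - 1‖)) := by
  have ha := hay.isUnit_of_norm_mul_sub_one_lt_one h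
  have hu := isUnit_of_norm_sub_one_lt_one h
  have hinv : a⁻¹ʳ = y * (a * y)⁻¹ʳ := by
    calc a⁻¹ʳ = a⁻¹ʳ * (a * (y * (a * y)⁻¹ʳ)) := by
          rw [← mul_assoc a y, Ring.mul_inverse_cancel _ hu, mul_one]
      _ = y * (a * y)⁻¹ʳ := Ring.inverse_mul_cancel_left _ _ ha
  have hneumann := norm_inverse_one_sub_sub_one_le (t := 1 - a * y) (by rwa [norm_sub_rev])
  rw [sub_sub_cancel, norm_sub_rev 1] at hneumann
  calc ‖a⁻¹ʳ - y‖ = ‖y * ((a * y)⁻¹ʳ - 1)‖ := by rw [hinv, mul_sub, mul_one]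
    _ ≤ ‖y‖ * ‖(a * y)⁻¹ʳ - 1‖ := norm_mul_le _ _
    _ ≤ _ := by gcongr

end NeumannSeries

section QuasiIdempotent

variable {𝕜 A : Type*} [Field 𝕜] [Ring A] [Algebra 𝕜 A]

def idempotentResolvent (z : 𝕜) (e : A) : A := z⁻¹ • (1 - e) + (z - 1)⁻¹ • e

theorem commute_algebraMap_sub_idempotentResolvent (z : 𝕜) (e : A) :
    Commute (algebraMap 𝕜 A z - e) (idempotentResolvent z e) := by
  have hae : Commute (algebraMap 𝕜 A z - e) e :=
    (Algebra.commute_algebraMap_left z e).sub_left (.refl e)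
  exact (((Commute.one_right _).sub_right hae).smul_right _).add_right (hae.smul_right _)

theorem algebraMap_sub_mul_idempotentResolvent_sub_one {z : 𝕜} (hz0 : z ≠ 0) (hz1 : z - 1 ≠ 0)
    (e : A) :
    (algebraMap 𝕜 A z - e) * idempotentResolvent z e - 1 = (z⁻¹ * (z - 1)⁻¹) • (e - e ^ 2) := by
  rw [idempotentResolvent, Algebra.algebraMap_eq_smul_one]
  simp only [mul_add, sub_mul, smul_mul_assoc, mul_smul_comm, one_mul, mul_one, mul_sub, pow_two]
  match_scalars <;> field_simp <;> ring

end QuasiIdempotent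

theorem one_le_norm_add_norm_sub_one {R : Type*} [SeminormedRing R] [NormOneClass R] (z : R) :
    1 ≤ ‖z‖ + ‖z - 1‖ := by
  simpa using norm_sub_le z (z - 1)

section NormedQuasiIdempotent

variable {𝕜 A : Type*} [NormedField 𝕜] [NormedRing A] [NormedAlgebra 𝕜 A]

theorem norm_idempotentResolvent_le (z : 𝕜) (e : A) :
    ‖idempotentResolvent z e‖ ≤ ‖z‖⁻¹ * ‖1 - e‖ + ‖z - 1‖⁻¹ * ‖e‖ := by
  rw [idempotentResolvent]
  simpa only [norm_smul, norm_inv] using norm_add_le (z⁻¹ • (1 - e)) ((z - 1)⁻¹ • e)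

theorem norm_algebraMap_sub_mul_idempotentResolvent_sub_one {z : 𝕜} (hz0 : z ≠ 0)
    (hz1 : z - 1 ≠ 0) (e : A) :
    ‖(algebraMap 𝕜 A z - e) * idempotentResolvent z e - 1‖ = ‖e ^ 2 - e‖ / (‖z‖ * ‖z - 1‖) := by
  rw [algebraMap_sub_mul_idempotentResolvent_sub_one hz0 hz1, norm_smul, norm_mul, norm_inv,
    norm_inv, norm_sub_rev e, ← mul_inv, inv_mul_eq_div]

variable {z : 𝕜} {s : ℝ}

theorem mul_one_sub_le_norm_mul_norm_sub_one (hz : ‖z‖ = s ∨ ‖z - 1‖ = s) :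
    s * (1 - s) ≤ ‖z‖ * ‖z - 1‖ := by
  have := one_le_norm_add_norm_sub_one z
  rcases hz with h | h <;> subst h <;> nlinarith [norm_nonneg z, norm_nonneg (z - 1)]

theorem inv_norm_add_inv_norm_sub_one_le (hs0 : 0 < s) (hs1 : s < 1)
    (hz : ‖z‖ = s ∨ ‖z - 1‖ = s) : ‖z‖⁻¹ + ‖z - 1‖⁻¹ ≤ (s * (1 - s))⁻¹ := by
  have hsum := one_le_norm_add_norm_sub_one z
  have h1s : 0 < 1 - s := by linarith
  calc ‖z‖⁻¹ + ‖z - 1‖⁻¹ ≤ s⁻¹ + (1 - s)⁻¹ := by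
        rcases hz with h | h
        · gcongr <;> linarith
        · rw [add_comm]; gcongr <;> linarith
    _ = (s * (1 - s))⁻¹ := by field_simp; ring

theorem norm_algebraMap_sub_mul_idempotentResolvent_sub_one_lt (hs0 : 0 < s) (hs1 : s < 1)
    (hz : ‖z‖ = s ∨ ‖z - 1‖ = s) {e : A} (he : ‖e ^ 2 - e‖ < s ^ 2) :
    ‖(algebraMap 𝕜 A z - e) * idempotentResolvent z e - 1‖ < s / (1 - s) := by
  have hs1s : 0 < s * (1 - s) := mul_pos hs0 (by linarith)
  have hprod := mul_one_sub_le_norm_mul_norm_sub_one hz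
  have hprod0 : 0 < ‖z‖ * ‖z - 1‖ := hs1s.trans_le hprod
  have hz0 : z ≠ 0 := norm_pos_iff.mp (pos_of_mul_pos_left hprod0 (norm_nonneg _))
  have hz1 : z - 1 ≠ 0 := norm_pos_iff.mp (pos_of_mul_pos_right hprod0 (norm_nonneg _))
  calc _ = ‖e ^ 2 - e‖ / (‖z‖ * ‖z - 1‖) :=
        norm_algebraMap_sub_mul_idempotentResolvent_sub_one hz0 hz1 e
    _ ≤ ‖e ^ 2 - e‖ / (s * (1 - s)) := by gcongr
    _ < s ^ 2 / (s * (1 - s)) := by gcongr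
    _ = s / (1 - s) := by field_simp

theorem norm_idempotentResolvent_le_div (hs0 : 0 < s) (hs1 : s < 1)
    (hz : ‖z‖ = s ∨ ‖z - 1‖ = s) {e : A} {N : ℝ} (heN : ‖e‖ ≤ N) (heN' : ‖1 - e‖ ≤ N) :
    ‖idempotentResolvent z e‖ ≤ N / (s * (1 - s)) :=
  calc ‖idempotentResolvent z e‖ ≤ ‖z‖⁻¹ * ‖1 - e‖ + ‖z - 1‖⁻¹ * ‖e‖ :=
        norm_idempotentResolvent_le z e
    _ ≤ (‖z‖⁻¹ + ‖z - 1‖⁻¹) * N := by rw [add_mul]; gcongr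
    _ ≤ (s * (1 - s))⁻¹ * N := by
        gcongr
        · exact (norm_nonneg e).trans heN
        · exact inv_norm_add_inv_norm_sub_one_le hs0 hs1 hz
    _ = N / (s * (1 - s)) := inv_mul_eq_div _ _

end NormedQuasiIdempotent

theorem stmt_11_general {A : Type*} [NormedRing A] [NormedAlgebra ℂ A] [CompleteSpace A]
    (e : A) (ε N : ℝ) (hε0 : 0 < ε) (hε : ε < 1 / 20)
    (he : ‖e ^ 2 - e‖ < ε) (heN : ‖e‖ ≤ N) (heN' : ‖1 - e‖ ≤ N)
    (z : ℂ) (hz : ‖z‖ = Real.sqrt ε ∨ ‖z - 1‖ = Real.sqrt ε) :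
    ‖(algebraMap ℂ A z - e) * (z⁻¹ • (1 - e) + (z - 1)⁻¹ • e) - 1‖
        < Real.sqrt ε / (1 - Real.sqrt ε) ∧
    ‖z⁻¹ • (1 - e) + (z - 1)⁻¹ • e‖ < (N + 1) / (Real.sqrt ε * (1 - Real.sqrt ε)) ∧
    IsUnit (algebraMap ℂ A z - e) ∧
    ‖Ring.inverse (algebraMap ℂ A z - e) - (z⁻¹ • (1 - e) + (z - 1)⁻¹ • e)‖
        < (N + 1) / ((1 - Real.sqrt ε) * (1 - 2 * Real.sqrt ε)) := by
  change ‖_ * idempotentResolvent z e - 1‖ < _ ∧ ‖idempotentResolvent z e‖ < _ ∧ _ ∧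
    ‖_ - idempotentResolvent z e‖ < _
  set s := Real.sqrt ε
  have hs0 : 0 < s := Real.sqrt_pos.mpr hε0
  have hs2 : s ^ 2 = ε := Real.sq_sqrt hε0.le
  have hs : s < 1 / 2 := by nlinarith
  have h1s : 0 < 1 - s := by linarith
  have h12s : 0 < 1 - 2 * s := by linarith
  set y := idempotentResolvent z e
  set δ := ‖(algebraMap ℂ A z - e) * y - 1‖
  have hδ : δ < s / (1 - s) :=
    norm_algebraMap_sub_mul_idempotentResolvent_sub_one_lt hs0 (by linarith) hz (hs2 ▸ he)
  have hy : ‖y‖ ≤ N / (s * (1 - s)) :=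
    norm_idempotentResolvent_le_div hs0 (by linarith) hz heN heN'
  have hcomm := commute_algebraMap_sub_idempotentResolvent z e
  have hδ1 : δ < 1 := hδ.trans ((div_lt_one h1s).mpr (by linarith))
  have htail : δ / (1 - δ) ≤ s / (1 - 2 * s) := by
    rw [div_le_div_iff₀ (by linarith) h12s]
    nlinarith [(lt_div_iff₀ h1s).mp hδ]
  refine ⟨hδ, hy.trans_lt (by gcongr; linarith), hcomm.isUnit_of_norm_mul_sub_one_lt_one hδ1, ?_⟩
  calc ‖(algebraMap ℂ A z - e)⁻¹ʳ - y‖ ≤ ‖y‖ * (δ / (1 - δ)) := hcomm.norm_inverse_sub_le hδ1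
    _ ≤ N / (s * (1 - s)) * (s / (1 - 2 * s)) :=
        mul_le_mul hy htail (div_nonneg (norm_nonneg _) (by linarith)) ((norm_nonneg y).trans hy)
    _ = N / ((1 - s) * (1 - 2 * s)) := by field_simp
    _ < (N + 1) / ((1 - s) * (1 - 2 * s)) := by gcongr; linarith

/-- resolvent estimates for a quasi-idempotent on the contour
`{|z| = √ε} ∪ {|z - 1| = √ε}`, where `y = z⁻¹ • (1 - e) + (z - 1)⁻¹ • e`. -/
theorem stmt_11 {A : Type*} [NormedRing A] [NormedAlgebra ℂ A] [CompleteSpace A]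
    (e : A) (ε N : ℝ) (hε0 : 0 < ε) (hε : ε < 1 / 20) (hN : 1 ≤ N)
    (he : ‖e ^ 2 - e‖ < ε) (heN : ‖e‖ ≤ N) (heN' : ‖1 - e‖ ≤ N)
    (z : ℂ) (hz : ‖z‖ = Real.sqrt ε ∨ ‖z - 1‖ = Real.sqrt ε) :
    ‖(algebraMap ℂ A z - e) * (z⁻¹ • (1 - e) + (z - 1)⁻¹ • e) - 1‖
        < Real.sqrt ε / (1 - Real.sqrt ε) ∧
    ‖z⁻¹ • (1 - e) + (z - 1)⁻¹ • e‖ < (N + 1) / (Real.sqrt ε * (1 - Real.sqrt ε)) ∧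
    IsUnit (algebraMap ℂ A z - e) ∧
    ‖Ring.inverse (algebraMap ℂ A z - e) - (z⁻¹ • (1 - e) + (z - 1)⁻¹ • e)‖
        < (N + 1) / ((1 - Real.sqrt ε) * (1 - 2 * Real.sqrt ε)) :=
  stmt_11_general e ε N hε0 hε he heN heN' z hz
end

section
/- Let A be a unital Banach algebra. Suppose u ∈ M₂(A) (2×2 matrices over A, with a submultiplicative norm making M₂(A) a Banach algebra with max-diagonal property) is given by the product w = X(U) Y(−V) X(U) J, where X(x) = [[1, x],[0, 1]], Y(y) = [[1, 0],[y, 1]], J = [[0, −1],[1, 0]], and max(‖UV − 1‖, ‖VU − 1‖) < ε with ‖U‖, ‖V‖ ≤ N. Then ‖w − diag(U, V)‖ < (N + 1)ε, where diag(U,V) = [[U, 0],[0, V]]. -/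
attribute [local instance] Matrix.linftyOpNormedAddCommGroup Matrix.linftyOpNormedRing

theorem norm2x2 {A : Type*} [NormedRing A] (a b c d : A) :
    ‖(!![a,b;c,d] : Matrix (Fin 2) (Fin 2) A)‖ = max (‖a‖+‖b‖) (‖c‖+‖d‖) := by
  rw [Matrix.linfty_opNorm_def]
  rw [show (Finset.univ : Finset (Fin 2)) = {0, 1} from rfl]
  rw [Finset.sup_insert, Finset.sup_singleton]
  push_cast [Fin.sum_univ_two]
  simp

/-- With `X(x) = [[1,x],[0,1]]`, `Y(y) = [[1,0],[y,1]]`, `J = [[0,-1],[1,0]]`,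
and `(U, V)` a quasi-inverse pair with `‖UV - 1‖, ‖VU - 1‖ < ε`, `‖U‖, ‖V‖ ≤ N`, the element
`w = X(U) Y(-V) X(U) J` of `M₂(A)` satisfies `‖w - diag(U, V)‖ < (N + 1) ε`. -/
theorem stmt_17 {A : Type*} [NormedRing A] [NormedAlgebra ℂ A]
    (U V : A) (ε N : ℝ) (hε : 0 < ε) (hN : 1 ≤ N)
    (hUV : ‖U * V - 1‖ < ε) (hVU : ‖V * U - 1‖ < ε)
    (hU : ‖U‖ ≤ N) (hV : ‖V‖ ≤ N) :
    ‖(!![1, U; 0, 1] * !![1, 0; -V, 1] * !![1, U; 0, 1] * !![0, -1; 1, 0] :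
        Matrix (Fin 2) (Fin 2) A) - !![U, 0; 0, V]‖ < (N + 1) * ε := by
  have heq : (!![1, U; 0, 1] * !![1, 0; -V, 1] * !![1, U; 0, 1] * !![0, -1; 1, 0] :
        Matrix (Fin 2) (Fin 2) A) - !![U, 0; 0, V] =
      !![(1 - U*V)*U, U*V - 1; 1 - V*U, 0] := by
    ext i j
    fin_cases i <;> fin_cases j <;>
      simp [Matrix.mul_apply, Fin.sum_univ_two] <;> noncomm_ring
  rw [heq, norm2x2]
  have h1 : ‖(1 - U*V)*U‖ + ‖U*V - 1‖ < (N + 1) * ε := by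
    have : ‖(1 - U*V)*U‖ ≤ ‖U*V - 1‖ * N := by
      calc ‖(1 - U*V)*U‖ ≤ ‖1 - U*V‖ * ‖U‖ := norm_mul_le _ _
        _ = ‖U*V - 1‖ * ‖U‖ := by rw [norm_sub_rev]
        _ ≤ ‖U*V - 1‖ * N := by gcongr
    nlinarith [norm_nonneg (U*V - 1)]
  have h2 : ‖(1 - V*U : A)‖ + ‖(0 : A)‖ < (N + 1) * ε := by
    rw [norm_zero, norm_sub_rev]
    nlinarith
  exact max_lt h1 h2
end
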